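/- arXiv:1907.03194 — 9 statements merged into one kernel-verified Lean document; each statement's English description precedes it below -/
import Mathlib

section
/- Let q > 1 be an integer and let v, k, g, g' be positive integers with g ≤ k and g' ≤ k. If (q - 1)(q^k - 1) = (q^g - 1)(q^{g'} - 1), then either g = 1 and g' = k, or g' = 1 and g = k. -/
/-!
Write `g = a + 1`, `g' = b + 1` and `f m = (q - 1) (q ^ m - 1)`. The identity
`(q^(a+1) - 1)(q^(b+1) - 1) = f (a + b + 1) + q (q^a - 1)(q^b - 1)` puts the right-hand side of the
equation between `f (a + b + 1)` and `f (a + b + 2)`, the excess being less than `q ^ (a + b + 1)`.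
As `f` is strictly increasing, `k = a + b + 1`, so the excess vanishes and `a = 0` or `b = 0`.
-/

theorem mul_pow_succ_sub_one {R : Type*} [CommRing R] (x : R) (a b : ℕ) :
    (x ^ (a + 1) - 1) * (x ^ (b + 1) - 1) =
      (x - 1) * (x ^ (a + b + 1) - 1) + x * (x ^ a - 1) * (x ^ b - 1) := by
  ring

namespace Int

variable {q : ℤ}

theorem strictMono_mul_pow_sub_one (hq : 1 < q) :
    StrictMono fun m : ℕ => (q - 1) * (q ^ m - 1) :=
  ((pow_right_strictMono₀ hq).add_const (-1)).const_mul (by linarith)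

theorem mul_pow_sub_one_mul_pow_sub_one_lt_pow (hq : 0 < q) (a b : ℕ) :
    q * (q ^ a - 1) * (q ^ b - 1) < q ^ (a + b + 1) := by
  have ha : 0 ≤ q ^ a - 1 := by linarith [one_le_pow₀ (M₀ := ℤ) (n := a) hq]
  have hb : 0 < q ^ b := pow_pos hq b
  calc q * (q ^ a - 1) * (q ^ b - 1) ≤ q * (q ^ a - 1) * q ^ b := by
        gcongr
        linarith
    _ < q * q ^ a * q ^ b := by gcongr; linarith
    _ = q ^ (a + b + 1) := by ring

theorem eq_of_mul_pow_sub_one_eq (hq : 1 < q) {a b k : ℕ}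
    (h : (q - 1) * (q ^ k - 1) = (q ^ (a + 1) - 1) * (q ^ (b + 1) - 1)) :
    k = a + b + 1 ∧ (a = 0 ∨ b = 0) := by
  set f : ℕ → ℤ := fun m => (q - 1) * (q ^ m - 1)
  have hf : StrictMono f := strictMono_mul_pow_sub_one hq
  set n := a + b + 1
  set excess := q * (q ^ a - 1) * (q ^ b - 1)
  have hfk : f k = f n + excess := h.trans (mul_pow_succ_sub_one q a b)
  have excess_nonneg : 0 ≤ excess := by
    have := one_le_pow₀ (M₀ := ℤ) (n := a) hq.le
    have := one_le_pow₀ (M₀ := ℤ) (n := b) hq.le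
    positivity
  have excess_lt : excess < f (n + 1) - f n := by
    have hgap : f (n + 1) - f n = (q - 1) ^ 2 * q ^ n := by simp only [f]; ring
    -- `(q - 1) ^ 2 ≥ 1` is where the integrality of `q` enters
    have : q ^ n ≤ (q - 1) ^ 2 * q ^ n :=
      le_mul_of_one_le_left (pow_pos (by linarith) n).le (by nlinarith)
    linarith [mul_pow_sub_one_mul_pow_sub_one_lt_pow (q := q) (by linarith) a b]
  have hkn : k = n := by
    have hle : n ≤ k := hf.le_iff_le.mp (by linarith)
    have hlt : k < n + 1 := hf.lt_iff_lt.mp (by linarith)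
    omega
  have excess_eq : excess = 0 := by rw [hkn] at hfk; linarith
  have exponent_eq_zero : ∀ m : ℕ, q ^ m - 1 = 0 → m = 0 := fun m hm =>
    (pow_right_strictMono₀ hq).injective (by simpa [sub_eq_zero] using hm)
  refine ⟨hkn, ?_⟩
  rcases mul_eq_zero.mp excess_eq with hqa | hb
  · rcases mul_eq_zero.mp hqa with hq0 | ha
    · linarith
    · exact .inl (exponent_eq_zero a ha)
  · exact .inr (exponent_eq_zero b hb)

end Int

theorem key_equation_general (q k g g' : ℕ) (hq : 1 < q)
    (hg : 0 < g) (hg' : 0 < g')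
    (heq : (q - 1) * (q ^ k - 1) = (q ^ g - 1) * (q ^ g' - 1)) :
    (g = 1 ∧ g' = k) ∨ (g' = 1 ∧ g = k) := by
  obtain ⟨a, rfl⟩ : ∃ a, g = a + 1 := ⟨g - 1, by omega⟩
  obtain ⟨b, rfl⟩ : ∃ b, g' = b + 1 := ⟨g' - 1, by omega⟩
  have heqZ : ((q : ℤ) - 1) * ((q : ℤ) ^ k - 1) =
      ((q : ℤ) ^ (a + 1) - 1) * ((q : ℤ) ^ (b + 1) - 1) := by
    zify [hq.le, Nat.one_le_pow k q (by omega), Nat.one_le_pow (a + 1) q (by omega),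
      Nat.one_le_pow (b + 1) q (by omega)] at heq
    exact heq
  obtain ⟨rfl, hab⟩ := Int.eq_of_mul_pow_sub_one_eq (by exact_mod_cast hq) heqZ
  omega

theorem key_equation (q v k g g' : ℕ) (hq : 1 < q) (hv : 0 < v) (hk : 0 < k)
    (hg : 0 < g) (hg' : 0 < g') (hgk : g ≤ k) (hg'k : g' ≤ k)
    (heq : (q - 1) * (q ^ k - 1) = (q ^ g - 1) * (q ^ g' - 1)) :
    (g = 1 ∧ g' = k) ∨ (g' = 1 ∧ g = k) :=
  key_equation_general q k g g' hq hg hg' heq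
end

section
/- Let q > 1 be an integer and v, k positive integers with k ≥ 2. If (q^{k-1} - 1)/(q - 1) divides (q^{v-1} - 1)/(q - 1) and (q^k - 1)/(q - 1) divides ((q^v - 1)/(q - 1)) · ((q^{v-1} - 1)/(q - 1)), then v ≡ 1 or v ≡ k (mod k(k-1)). -/
/-!
Clearing the common factor `q - 1`, the hypotheses say `q^(k-1) - 1 ∣ q^(v-1) - 1`, hence
`k - 1 ∣ v - 1`, and `q^k - 1 ∣ (q^v - 1)(q^(v-1) - 1)`. Since
`gcd (q^a - 1) (q^b - 1) = q^gcd a b - 1`, the latter forces `q^k - 1 ∣ (q^d - 1)(q^e - 1)` with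
`d = gcd k v` and `e = gcd k (v-1)`. These are coprime divisors of `k`, so unless one of them is `k`
we get `d + e ≤ k`, and then `(q^d - 1)(q^e - 1) < q^(d+e) - 1 ≤ q^k - 1` contradicts the
divisibility. Thus `k ∣ v` or `k ∣ v - 1`, and the Chinese remainder theorem for the coprime
moduli `k`, `k - 1` concludes.
-/

namespace Nat

lemma dvd_of_div_dvd_div {a b d : ℕ} (ha : d ∣ a) (hb : d ∣ b) (h : a / d ∣ b / d) :
    a ∣ b := by
  simpa only [Nat.div_mul_cancel ha, Nat.div_mul_cancel hb] using Nat.mul_dvd_mul_right h d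

lemma dvd_mul_of_div_dvd_div_mul_div {a b c d : ℕ} (ha : d ∣ a) (hb : d ∣ b) (hc : d ∣ c)
    (h : a / d ∣ b / d * (c / d)) : a ∣ b * c :=
  calc a = a / d * d := (Nat.div_mul_cancel ha).symm
    _ ∣ b / d * (c / d) * d := Nat.mul_dvd_mul_right h d
    _ = b / d * c := by rw [mul_assoc, Nat.div_mul_cancel hc]
    _ ∣ b * c := Nat.mul_dvd_mul_right (Nat.div_dvd_of_dvd hb) c

lemma dvd_of_pow_sub_one_dvd_pow_sub_one {q m n : ℕ} (hq : 1 < q)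
    (h : q ^ m - 1 ∣ q ^ n - 1) : m ∣ n := by
  have hsub : q ^ gcd m n - 1 = q ^ m - 1 := by
    rw [← pow_sub_one_gcd_pow_sub_one, gcd_eq_left h]
  have hpow : q ^ gcd m n = q ^ m :=
    sub_one_cancel (Nat.pow_pos (by omega)) (Nat.pow_pos (by omega)) hsub
  rw [← Nat.pow_right_injective hq hpow]
  exact gcd_dvd_right m n

lemma add_le_of_coprime_of_dvd_of_lt {d e k : ℕ} (hde : Coprime d e) (hd : d ∣ k) (he : e ∣ k)
    (hdk : d < k) (hek : e < k) : d + e ≤ k := by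
  have hde_le : d * e ≤ k := le_of_dvd (by omega) (hde.mul_dvd_of_dvd_of_dvd hd he)
  rcases le_or_gt d 1 with hd1 | hd1
  · omega
  rcases le_or_gt e 1 with he1 | he1
  · omega
  nlinarith

lemma pow_sub_one_mul_pow_sub_one_lt {q a b : ℕ} (hq : 1 < q) (ha : a ≠ 0) :
    (q ^ a - 1) * (q ^ b - 1) < q ^ (a + b) - 1 := by
  have hx : 1 < q ^ a := one_lt_pow ha hq
  have hy : 1 ≤ q ^ b := Nat.one_le_pow _ _ (by omega)
  have hxy : 1 ≤ q ^ a * q ^ b := Nat.one_le_iff_ne_zero.mpr (by positivity)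
  rw [pow_add]
  zify [hx.le, hy, hxy]
  nlinarith

lemma dvd_or_dvd_of_pow_sub_one_dvd_mul {q k m n : ℕ} (hq : 1 < q) (hk : 0 < k)
    (hmn : Coprime m n) (h : q ^ k - 1 ∣ (q ^ m - 1) * (q ^ n - 1)) : k ∣ m ∨ k ∣ n := by
  have hgcd : q ^ k - 1 ∣ (q ^ gcd k m - 1) * (q ^ gcd k n - 1) := by
    simpa only [pow_sub_one_gcd_pow_sub_one] using dvd_gcd_mul_gcd_iff_dvd_mul.mpr h
  by_contra! hndvd
  have hm : gcd k m < k := (le_of_dvd hk (gcd_dvd_left k m)).lt_of_ne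
    fun heq ↦ hndvd.1 (heq ▸ gcd_dvd_right k m)
  have hn : gcd k n < k := (le_of_dvd hk (gcd_dvd_left k n)).lt_of_ne
    fun heq ↦ hndvd.2 (heq ▸ gcd_dvd_right k n)
  have hsum : gcd k m + gcd k n ≤ k := add_le_of_coprime_of_dvd_of_lt (hmn.gcd_both k k)
    (gcd_dvd_left k m) (gcd_dvd_left k n) hm hn
  have hpos : 0 < (q ^ gcd k m - 1) * (q ^ gcd k n - 1) := Nat.mul_pos
    (Nat.sub_pos_of_lt (one_lt_pow (gcd_pos_of_pos_left m hk).ne' hq))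
    (Nat.sub_pos_of_lt (one_lt_pow (gcd_pos_of_pos_left n hk).ne' hq))
  have hlt := pow_sub_one_mul_pow_sub_one_lt (b := gcd k n) hq (gcd_pos_of_pos_left m hk).ne'
  have hle : q ^ (gcd k m + gcd k n) - 1 ≤ q ^ k - 1 :=
    Nat.sub_le_sub_right (Nat.pow_le_pow_right (by omega) hsum) 1
  exact absurd (le_of_dvd hpos hgcd) (by omega)

lemma modEq_one_or_modEq_self_of_dvd {k v : ℕ} (hk : 0 < k) (hv : 0 < v) (hk1 : k - 1 ∣ v - 1)
    (h : k ∣ v ∨ k ∣ v - 1) : v ≡ 1 [MOD k * (k - 1)] ∨ v ≡ k [MOD k * (k - 1)] := by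
  have hcop : Coprime k (k - 1) := (coprime_self_sub_right hk).mpr (coprime_one_right k)
  have hv1 : v ≡ 1 [MOD k - 1] := ((modEq_iff_dvd' hv).mpr hk1).symm
  rcases h with hkv | hkv1
  · right
    have hvk : v ≡ k [MOD k] :=
      (modEq_zero_iff_dvd.mpr hkv).trans (modEq_zero_iff_dvd.mpr dvd_rfl).symm
    have hk_one : k ≡ 1 [MOD k - 1] := ((modEq_iff_dvd' hk).mpr dvd_rfl).symm
    exact (modEq_and_modEq_iff_modEq_mul hcop).mp ⟨hvk, hv1.trans hk_one.symm⟩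
  · left
    exact (modEq_and_modEq_iff_modEq_mul hcop).mp ⟨((modEq_iff_dvd' hv).mpr hkv1).symm, hv1⟩

end Nat

theorem steiner_admissibility (q v k : ℕ) (hq : 1 < q) (hv : 0 < v) (hk : 2 ≤ k)
    (h1 : (q ^ (k - 1) - 1) / (q - 1) ∣ (q ^ (v - 1) - 1) / (q - 1))
    (h2 : (q ^ k - 1) / (q - 1) ∣ ((q ^ v - 1) / (q - 1)) * ((q ^ (v - 1) - 1) / (q - 1))) :
    v ≡ 1 [MOD k * (k - 1)] ∨ v ≡ k [MOD k * (k - 1)] := by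
  have hdvd (n : ℕ) : q - 1 ∣ q ^ n - 1 := Nat.sub_one_dvd_pow_sub_one q n
  have hk1v1 : k - 1 ∣ v - 1 := Nat.dvd_of_pow_sub_one_dvd_pow_sub_one hq <|
    Nat.dvd_of_div_dvd_div (hdvd _) (hdvd _) h1
  have h2' : q ^ k - 1 ∣ (q ^ v - 1) * (q ^ (v - 1) - 1) :=
    Nat.dvd_mul_of_div_dvd_div_mul_div (hdvd _) (hdvd _) (hdvd _) h2
  have hcop : v.Coprime (v - 1) := (Nat.coprime_self_sub_right hv).mpr (Nat.coprime_one_right v)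
  exact Nat.modEq_one_or_modEq_self_of_dvd (by omega) hv hk1v1 <|
    Nat.dvd_or_dvd_of_pow_sub_one_dvd_mul hq (by omega) hcop h2'
end

section
/- Let v be a positive integer and q > 1 an integer. If v ≡ 1 (mod k(k-1)) or v ≡ k (mod k(k-1)), then (q^v - 1)/(q - 1) ≡ 1 (mod m(m-1)) or (q^v - 1)/(q - 1) ≡ m (mod m(m-1)) respectively, where m = (q^k - 1)/(q - 1). -/
/-!
Write `S n = ∑_{i<n} q^i = [n]_q`. Then `S (u + t) = S u + q^u S t`, and `a ∣ b` implies
`S a ∣ S b`. Since `S (n + 1) = 1 + q S n`, the numbers `S (n + 1)` and `S n` are coprime, so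
`n (n + 1) ∣ t` gives `S (n + 1) S n ∣ S t`. Hence `v ≡ u (mod k (k - 1))` with `u ≤ v` yields
`S v ≡ S u (mod q^u S k S (k - 1))`, and `S k (S k - 1) = q S k S (k - 1)` divides this modulus for
`u = 1` and `u = k`.
-/

open Finset

section CommSemiring

variable {R : Type*} [CommSemiring R] (x : R)

theorem geom_sum_add (m n : ℕ) :
    ∑ i ∈ range (m + n), x ^ i = ∑ i ∈ range m, x ^ i + x ^ m * ∑ i ∈ range n, x ^ i := by
  simp only [sum_range_add, pow_add, mul_sum]

theorem geom_sum_dvd_geom_sum_of_dvd {a b : ℕ} (h : a ∣ b) :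
    ∑ i ∈ range a, x ^ i ∣ ∑ i ∈ range b, x ^ i := by
  obtain ⟨c, rfl⟩ := h
  induction c with
  | zero => simp
  | succ c ih =>
    rw [Nat.mul_succ, geom_sum_add]
    exact dvd_add ih (dvd_mul_left _ _)

end CommSemiring

namespace Nat

variable (q : ℕ)

theorem coprime_geom_sum_succ (n : ℕ) :
    Coprime (∑ i ∈ range (n + 1), q ^ i) (∑ i ∈ range n, q ^ i) := by
  rw [geom_sum_succ, add_comm, coprime_add_mul_right_left]
  exact coprime_one_left _

theorem geom_sum_succ_mul_geom_sum_dvd {n t : ℕ} (h : (n + 1) * n ∣ t) :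
    (∑ i ∈ range (n + 1), q ^ i) * ∑ i ∈ range n, q ^ i ∣ ∑ i ∈ range t, q ^ i :=
  (coprime_geom_sum_succ q n).mul_dvd_of_dvd_of_dvd
    (geom_sum_dvd_geom_sum_of_dvd _ (dvd_trans (dvd_mul_right _ _) h))
    (geom_sum_dvd_geom_sum_of_dvd _ (dvd_trans (dvd_mul_left _ _) h))

theorem geom_sum_modEq_of_dvd_sub {n u v : ℕ} (huv : u ≤ v) (h : (n + 1) * n ∣ v - u) :
    ∑ i ∈ range v, q ^ i ≡ ∑ i ∈ range u, q ^ i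
      [MOD q ^ u * ((∑ i ∈ range (n + 1), q ^ i) * ∑ i ∈ range n, q ^ i)] := by
  obtain ⟨t, rfl⟩ := Nat.exists_eq_add_of_le huv
  rw [Nat.add_sub_cancel_left] at h
  rw [geom_sum_add q u t]
  have hdvd := mul_dvd_mul_left (q ^ u) (geom_sum_succ_mul_geom_sum_dvd q h)
  simpa only [add_zero] using (Nat.modEq_zero_iff_dvd.mpr hdvd).add_left (∑ i ∈ range u, q ^ i)

theorem ModEq.le_of_le_modulus {a b n : ℕ} (h : a ≡ b [MOD n]) (hb : b ≤ n) (ha : 0 < a) :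
    b ≤ a := by
  rcases hb.lt_or_eq with hb | rfl
  · calc b = b % n := (Nat.mod_eq_of_lt hb).symm
      _ = a % n := h.symm
      _ ≤ a := Nat.mod_le a n
  · exact Nat.le_of_dvd ha (Nat.dvd_of_mod_eq_zero (Eq.trans h (Nat.mod_self b)))

end Nat

theorem congruence_lift (q v k : ℕ) (hq : 1 < q) (hv : 0 < v) :
    (v ≡ 1 [MOD k * (k - 1)] →
      (q ^ v - 1) / (q - 1) ≡ 1
        [MOD ((q ^ k - 1) / (q - 1)) * ((q ^ k - 1) / (q - 1) - 1)]) ∧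
    (v ≡ k [MOD k * (k - 1)] →
      (q ^ v - 1) / (q - 1) ≡ (q ^ k - 1) / (q - 1)
        [MOD ((q ^ k - 1) / (q - 1)) * ((q ^ k - 1) / (q - 1) - 1)]) := by
  simp only [← Nat.geomSum_eq hq]
  rcases Nat.lt_or_ge k 2 with hk | hk
  · have hmod : k * (k - 1) = 0 := by interval_cases k <;> rfl
    simp only [hmod, Nat.modEq_zero_iff]
    exact ⟨fun h => by subst h; rfl, fun h => by subst h; rfl⟩
  obtain ⟨n, rfl⟩ : ∃ n, k = n + 1 := ⟨k - 1, by omega⟩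
  have hM : (∑ i ∈ range (n + 1), q ^ i) * (∑ i ∈ range (n + 1), q ^ i - 1) =
      q * ((∑ i ∈ range (n + 1), q ^ i) * ∑ i ∈ range n, q ^ i) := by
    rw [geom_sum_succ, Nat.add_sub_cancel]
    ring
  rw [hM, Nat.add_sub_cancel]
  constructor
  · intro h
    have := Nat.geom_sum_modEq_of_dvd_sub q hv ((Nat.modEq_iff_dvd' hv).mp h.symm)
    rwa [pow_one, geom_sum_one] at this
  · intro h
    have hkv : n + 1 ≤ v := h.le_of_le_modulus (Nat.le_mul_of_pos_right _ (by omega)) hv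
    exact (Nat.geom_sum_modEq_of_dvd_sub q hkv ((Nat.modEq_iff_dvd' hkv).mp h.symm)).of_dvd
      (mul_dvd_mul_right (dvd_pow_self q n.succ_ne_zero) _)
end

section
/- Let p be a prime power, v a positive integer, and let F = {q^i mod N : 0 ≤ i ≤ v-1} be the cyclic subgroup of units of Z/NZ generated by q, where N = (q^v - 1)/(q - 1) and q is a prime power with gcd(q, N) = 1. If F acts semiregularly (by multiplication) on the nonzero elements of Z/NZ and F is nontrivial, then v is prime and q is not congruent to 1 mod v. -/
/-!
If `d` is a proper divisor of `v`, then `m = [d]_q` is a proper divisor of `N = [v]_q` with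
`q ^ d ≡ 1 [MOD m]`, so `q ^ d` fixes the nonzero element `N / m` of `ZMod N`. Semiregularity
then forces `q ^ d ≡ 1 [MOD N]`, impossible since `1 < q ^ d < N`. If instead `q ≡ 1 [MOD v]`,
then `v ∣ N` and the same argument with `m = v` and `d = 1` applies.
-/

open Finset

theorem geom_sum_dvd_geom_sum {R : Type*} [CommSemiring R] (x : R) {d v : ℕ} (h : d ∣ v) :
    ∑ i ∈ range d, x ^ i ∣ ∑ i ∈ range v, x ^ i := by
  obtain ⟨k, rfl⟩ := h
  induction k with
  | zero => simp
  | succ k ih =>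
    rw [mul_add_one, sum_range_add]
    simp_rw [pow_add, ← mul_sum]
    exact dvd_add ih (dvd_mul_left _ _)

theorem Nat.pow_modEq_one_geom_sum (q d : ℕ) : q ^ d ≡ 1 [MOD ∑ i ∈ range d, q ^ i] := by
  refine Nat.ModEq.symm ?_
  rw [← Int.natCast_modEq_iff, Int.modEq_iff_dvd]
  push_cast
  exact Dvd.intro _ (geom_sum_mul (q : ℤ) d)

theorem Nat.dvd_geom_sum_of_modEq_one {q v : ℕ} (h : q ≡ 1 [MOD v]) :
    v ∣ ∑ i ∈ range v, q ^ i := by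
  rw [← ZMod.natCast_eq_zero_iff]
  push_cast
  rw [(ZMod.natCast_eq_natCast_iff _ _ _).mpr h]
  simp

theorem Nat.pow_lt_geom_sum (q : ℕ) {d v : ℕ} (hd : 0 < d) (hdv : d < v) :
    q ^ d < ∑ i ∈ range v, q ^ i := by
  have hsub : {0, d} ⊆ range v := by
    simp only [insert_subset_iff, singleton_subset_iff, mem_range]
    omega
  calc q ^ d < 1 + q ^ d := by omega
    _ = ∑ i ∈ {0, d}, q ^ i := by rw [sum_pair hd.ne, pow_zero]
    _ ≤ ∑ i ∈ range v, q ^ i := sum_le_sum_of_subset hsub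

theorem ZMod.natCast_div_ne_zero {m n : ℕ} (hn : n ≠ 0) (hmn : m ∣ n) (hm : 1 < m) :
    ((n / m : ℕ) : ZMod n) ≠ 0 := by
  rw [Ne, ZMod.natCast_eq_zero_iff]
  intro h
  have := Nat.le_of_dvd (Nat.div_pos (Nat.le_of_dvd (Nat.pos_of_ne_zero hn) hmn) (by omega)) h
  have := Nat.div_lt_self (Nat.pos_of_ne_zero hn) hm
  omega

theorem ZMod.natCast_mul_div_of_modEq_one {k m n : ℕ} (hmn : m ∣ n) (hk : k ≡ 1 [MOD m]) :
    (k : ZMod n) * ((n / m : ℕ) : ZMod n) = ((n / m : ℕ) : ZMod n) := by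
  have h := hk.mul_right' (n / m)
  rw [Nat.mul_div_cancel' hmn, one_mul] at h
  exact_mod_cast (ZMod.natCast_eq_natCast_iff _ _ _).mpr h

theorem Nat.modEq_one_of_fixed_point_free {k m n : ℕ}
    (hfix : ∀ x : ZMod n, x ≠ 0 → (k : ZMod n) * x = x → (k : ZMod n) = 1)
    (hn : n ≠ 0) (hmn : m ∣ n) (hm : 1 < m) (hk : k ≡ 1 [MOD m]) : k ≡ 1 [MOD n] :=
  (ZMod.natCast_eq_natCast_iff _ _ _).mp <| by
    simpa using
      hfix _ (ZMod.natCast_div_ne_zero hn hmn hm) (ZMod.natCast_mul_div_of_modEq_one hmn hk)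

theorem Nat.not_pow_modEq_one {q d n : ℕ} (hq : 2 ≤ q) (hd : 0 < d) (hlt : q ^ d < n) :
    ¬ q ^ d ≡ 1 [MOD n] := fun h =>
  have h1 := Nat.one_lt_pow hd.ne' hq
  h1.ne' (h.eq_of_lt_of_lt hlt (by omega))

theorem frobenius_semiregular_necessary_general (q v : ℕ) (hq : IsPrimePow q) (hv : 0 < v)
    (hsemi : ∀ x : ZMod ((q ^ v - 1) / (q - 1)), x ≠ 0 → ∀ i : ℕ,
      (q : ZMod ((q ^ v - 1) / (q - 1))) ^ i * x = x →
        (q : ZMod ((q ^ v - 1) / (q - 1))) ^ i = 1)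
    (hnontriv : ∃ i : ℕ, (q : ZMod ((q ^ v - 1) / (q - 1))) ^ i ≠ 1) :
    v.Prime ∧ ¬ q ≡ 1 [MOD v] := by
  have hq2 := hq.two_le
  rw [← Nat.geomSum_eq hq2] at hsemi hnontriv
  set N := ∑ i ∈ range v, q ^ i
  have hN : N ≠ 0 := (geom_sum_pos (Nat.zero_le q) hv.ne').ne'
  have hv1 : 1 < v := by
    by_contra! h
    obtain ⟨i, hi⟩ := hnontriv
    have : Subsingleton (ZMod N) := ZMod.subsingleton_iff.mpr (by simp [N, show v = 1 by omega])
    exact hi (Subsingleton.elim _ _)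
  have key : ∀ m d, m ∣ N → 1 < m → 0 < d → d < v → ¬ q ^ d ≡ 1 [MOD m] :=
    fun m d hmN hm hd hdv h => Nat.not_pow_modEq_one hq2 hd (Nat.pow_lt_geom_sum q hd hdv) <|
      Nat.modEq_one_of_fixed_point_free
        (fun x hx hfix => by simpa using hsemi x hx d (by simpa using hfix)) hN hmN hm h
  refine ⟨Nat.prime_def_lt.mpr ⟨hv1, fun d hdv hdvd => ?_⟩,
    fun h => key v 1 (Nat.dvd_geom_sum_of_modEq_one h) hv1 one_pos hv1 (by simpa using h)⟩
  by_contra hd1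
  have hd : 0 < d := Nat.pos_of_dvd_of_pos hdvd hv
  have hm : 1 < ∑ i ∈ range d, q ^ i :=
    (by omega : 1 < q).trans (by simpa using Nat.pow_lt_geom_sum q one_pos (by omega : 1 < d))
  exact key _ d (geom_sum_dvd_geom_sum q hdvd) hm hd hdv (Nat.pow_modEq_one_geom_sum q d)

theorem frobenius_semiregular_necessary (q v : ℕ) (hq : IsPrimePow q) (hv : 0 < v)
    (hcop : Nat.gcd q ((q ^ v - 1) / (q - 1)) = 1)
    (hsemi : ∀ x : ZMod ((q ^ v - 1) / (q - 1)), x ≠ 0 → ∀ i : ℕ,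
      (q : ZMod ((q ^ v - 1) / (q - 1))) ^ i * x = x →
        (q : ZMod ((q ^ v - 1) / (q - 1))) ^ i = 1)
    (hnontriv : ∃ i : ℕ, (q : ZMod ((q ^ v - 1) / (q - 1))) ^ i ≠ 1) :
    v.Prime ∧ ¬ q ≡ 1 [MOD v] :=
  frobenius_semiregular_necessary_general q v hq hv hsemi hnontriv
end

section
/- Let q be a prime power, v a prime with q not congruent to 1 mod v, and N = (q^v - 1)/(q - 1). Then gcd(q - 1, N) = 1, and for every nonzero x in Z/NZ, if q·x ≡ x (mod N) then x = 0; hence multiplication by q acts semiregularly on the nonzero elements of Z/NZ. -/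
/-!
Write `N = 1 + q + ⋯ + q ^ (v - 1)`. Since `q ≡ 1 [MOD q - 1]`, we get `N ≡ v [MOD q - 1]`, so
`gcd (q - 1) N = gcd (q - 1) v = 1` because the prime `v` does not divide `q - 1`. If `v ∤ i`, then
`gcd (q ^ i - 1) N` divides `gcd (q ^ i - 1) (q ^ v - 1) = q ^ gcd i v - 1 = q - 1`, hence divides
`gcd (q - 1) N = 1`. Thus `q ^ i - 1` is a unit of `ZMod N` and `q ^ i x = x` forces `x = 0`;
when `v ∣ i`, `q ^ i = 1` in `ZMod N` because `N ∣ q ^ v - 1`.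
-/

open Finset

namespace Nat

theorem geom_sum_modEq_of_modEq_one {q m : ℕ} (h : q ≡ 1 [MOD m]) (n : ℕ) :
    ∑ i ∈ range n, q ^ i ≡ n [MOD m] := by
  simpa using ModEq.sum (s := range n) fun i _ => h.pow i

theorem geom_sum_dvd_pow_sub_one (q n : ℕ) : ∑ i ∈ range n, q ^ i ∣ q ^ n - 1 := by
  rcases q.eq_zero_or_pos with rfl | hq
  · rcases n with _ | n <;> simp
  · obtain ⟨x, rfl⟩ : ∃ x, q = x + 1 := ⟨q - 1, by omega⟩
    exact Dvd.intro x (by have := geom_sum_mul_add x n; omega)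

theorem coprime_sub_one_geom_sum {q v : ℕ} (hq : q ≠ 0) (hv : v.Prime)
    (hqv : ¬ q ≡ 1 [MOD v]) : Coprime (q - 1) (∑ i ∈ range v, q ^ i) := by
  have hq_pos : 1 ≤ q := one_le_iff_ne_zero.2 hq
  have hq1 : q ≡ 1 [MOD q - 1] := ((modEq_iff_dvd' hq_pos).2 dvd_rfl).symm
  have hvq : ¬ v ∣ q - 1 := fun h => hqv ((modEq_iff_dvd' hq_pos).2 h).symm
  rw [Coprime, gcd_comm, (geom_sum_modEq_of_modEq_one hq1 v).gcd_eq]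
  exact hv.coprime_iff_not_dvd.2 hvq

theorem coprime_pow_sub_one_geom_sum {q v i : ℕ} (hq : q ≠ 0) (hv : v.Prime)
    (hqv : ¬ q ≡ 1 [MOD v]) (hvi : ¬ v ∣ i) : Coprime (q ^ i - 1) (∑ j ∈ range v, q ^ j) := by
  set N := ∑ j ∈ range v, q ^ j
  have hgcd_iv : gcd i v = 1 := Coprime.symm (hv.coprime_iff_not_dvd.2 hvi)
  have hdvd_sub_one : gcd (q ^ i - 1) N ∣ q - 1 := by
    have := dvd_gcd (gcd_dvd_left (q ^ i - 1) N)
      ((gcd_dvd_right _ _).trans (geom_sum_dvd_pow_sub_one q v))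
    rwa [pow_sub_one_gcd_pow_sub_one, hgcd_iv, pow_one] at this
  have := dvd_gcd hdvd_sub_one (gcd_dvd_right (q ^ i - 1) N)
  rwa [coprime_sub_one_geom_sum hq hv hqv, Nat.dvd_one] at this

end Nat

theorem eq_zero_of_isUnit_sub_one_of_mul_eq_self {R : Type*} [Ring R] {a x : R}
    (ha : IsUnit (a - 1)) (h : a * x = x) : x = 0 :=
  ha.mul_right_eq_zero.mp (by rw [sub_mul, one_mul, h, sub_self])

namespace ZMod

theorem natCast_pow_sub_one {n a k : ℕ} (ha : a ≠ 0) :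
    ((a ^ k - 1 : ℕ) : ZMod n) = (a : ZMod n) ^ k - 1 := by
  rw [Nat.cast_sub (Nat.one_le_pow _ _ (Nat.pos_of_ne_zero ha)), Nat.cast_pow, Nat.cast_one]

theorem isUnit_natCast_pow_sub_one {n a k : ℕ} (ha : a ≠ 0) (h : (a ^ k - 1).Coprime n) :
    IsUnit ((a : ZMod n) ^ k - 1) :=
  natCast_pow_sub_one ha ▸ (isUnit_iff_coprime _ n).2 h

theorem natCast_pow_eq_one {n a k : ℕ} (ha : a ≠ 0) (h : n ∣ a ^ k - 1) :
    (a : ZMod n) ^ k = 1 :=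
  sub_eq_zero.1 (natCast_pow_sub_one ha ▸ (natCast_eq_zero_iff _ n).2 h)

end ZMod

theorem frobenius_semiregular_sufficient (q v : ℕ) (hq : IsPrimePow q) (hv : v.Prime)
    (hq1 : ¬ q ≡ 1 [MOD v]) :
    Nat.gcd (q - 1) ((q ^ v - 1) / (q - 1)) = 1 ∧
    (∀ x : ZMod ((q ^ v - 1) / (q - 1)),
      (q : ZMod ((q ^ v - 1) / (q - 1))) * x = x → x = 0) ∧
    (∀ (i : ℕ) (x : ZMod ((q ^ v - 1) / (q - 1))), x ≠ 0 →
      (q : ZMod ((q ^ v - 1) / (q - 1))) ^ i * x = x →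
        (q : ZMod ((q ^ v - 1) / (q - 1))) ^ i = 1) := by
  have hq0 : q ≠ 0 := hq.ne_zero
  rw [← Nat.geomSum_eq hq.two_le v]
  have hcop := Nat.coprime_sub_one_geom_sum hq0 hv hq1
  refine ⟨hcop, fun x hx => ?_, fun i x hx hix => ?_⟩
  · refine eq_zero_of_isUnit_sub_one_of_mul_eq_self ?_ hx
    simpa using ZMod.isUnit_natCast_pow_sub_one (k := 1) hq0 (by simpa using hcop)
  · by_cases hvi : v ∣ i
    · obtain ⟨k, rfl⟩ := hvi
      rw [pow_mul, ZMod.natCast_pow_eq_one hq0 (Nat.geom_sum_dvd_pow_sub_one q v), one_pow]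
    · exact absurd (eq_zero_of_isUnit_sub_one_of_mul_eq_self
        (ZMod.isUnit_natCast_pow_sub_one hq0 (Nat.coprime_pow_sub_one_geom_sum hq0 hv hq1 hvi))
        hix) hx
end

section
/- If a 2-(v, Γ, λ) design over F_q exists where Γ is a simple graph with s edges, then 2s divides λ·q·[v]_q·[v-1]_q, where [n]_q = (q^n - 1)/(q - 1). -/
/-! Each block is the image of `Γ` under an injective map, so it joins exactly `2s` ordered pairs
of distinct points, while each of the `N(N - 1)` ordered pairs of distinct points, `N = [v]_q`,
is joined by exactly `λ` blocks. Hence `λ N (N - 1) = 2s |B|`, and `N - 1 = q [v - 1]_q`. -/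

open Finset Projectivization

namespace SimpleGraph

variable {V : Type*} [Fintype V]

open scoped Classical in
theorem sum_countP_adj (𝒢 : Multiset (SimpleGraph V)) :
    ∑ x : V × V, 𝒢.countP (fun G => G.Adj x.1 x.2) = (𝒢.map fun G => 2 * #G.edgeFinset).sum := by
  induction 𝒢 using Multiset.induction with
  | empty => simp
  | cons G 𝒢 ih =>
    simp only [Multiset.countP_cons, sum_add_distrib, ih, Multiset.map_cons, Multiset.sum_cons,
      two_mul_card_edgeFinset, card_filter, add_comm]

open scoped Classical in
theorem mul_card_mul_card_sub_one_eq_of_countP_adj (𝒢 : Multiset (SimpleGraph V)) {lam s : ℕ}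
    (h𝒢 : ∀ p r : V, p ≠ r → 𝒢.countP (fun G => G.Adj p r) = lam)
    (hs : ∀ G ∈ 𝒢, #G.edgeFinset = s) :
    lam * (Fintype.card V * (Fintype.card V - 1)) = 2 * s * Multiset.card 𝒢 := by
  have hsum : ∑ x : V × V, 𝒢.countP (fun G => G.Adj x.1 x.2) = 2 * s * Multiset.card 𝒢 := by
    rw [sum_countP_adj, Multiset.map_congr rfl fun G hG => congrArg (2 * ·) (hs G hG),
      Multiset.map_const', Multiset.sum_replicate, smul_eq_mul, mul_comm]
  rw [← hsum, ← sum_subset (subset_univ univ.offDiag)]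
  · rw [sum_congr rfl fun x hx => h𝒢 x.1 x.2 (mem_offDiag.1 hx).2.2, sum_const, offDiag_card,
      card_univ, smul_eq_mul, Nat.mul_sub_one, mul_comm]
  · intro x _ hx
    simp only [mem_offDiag, mem_univ, true_and, not_not] at hx
    simp [hx]

end SimpleGraph

theorem Nat.pow_succ_sub_one_div_sub_one {q : ℕ} (hq : 2 ≤ q) (n : ℕ) :
    (q ^ (n + 1) - 1) / (q - 1) = q * ((q ^ n - 1) / (q - 1)) + 1 := by
  rw [← Nat.geomSum_eq hq, ← Nat.geomSum_eq hq, sum_range_succ', mul_sum]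
  simp [pow_succ']

theorem Projectivization.card_fin_fun {F : Type*} [Field F] [Fintype F] (v : ℕ) :
    Nat.card (Projectivization F (Fin v → F)) = (Fintype.card F ^ v - 1) / (Fintype.card F - 1) := by
  simp [card'']

theorem design_over_Fq_edge_divisibility_general
    (q v lam s m : ℕ)
    (F : Type*) [Field F] [Fintype F] (hF : Fintype.card F = q)
    (Γ : SimpleGraph (Fin m)) [DecidableRel Γ.Adj] (hs : Γ.edgeFinset.card = s)
    (B : Multiset (Fin m → Projectivization F (Fin v → F)))
    (hinj : ∀ f ∈ B, Function.Injective f)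
    (hpair : ∀ p r : Projectivization F (Fin v → F), p ≠ r →
      @Multiset.countP _ (fun f => ∃ a b : Fin m, Γ.Adj a b ∧ f a = p ∧ f b = r)
        (Classical.decPred _) B = lam) :
    2 * s ∣ lam * q * ((q ^ v - 1) / (q - 1)) * ((q ^ (v - 1) - 1) / (q - 1)) := by
  classical
  subst hF
  obtain _ | v := v
  · simp
  have : Finite (Projectivization F (Fin (v + 1) → F)) := Quotient.finite _
  have := Fintype.ofFinite (Projectivization F (Fin (v + 1) → F))
  have hblock : ∀ G ∈ B.map Γ.map, #G.edgeFinset = s := by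
    intro G hG
    obtain ⟨f, hf, rfl⟩ := Multiset.mem_map.1 hG
    convert (Γ.card_edgeFinset_map ⟨f, hinj f hf⟩).trans hs
    rfl
  have hcover (p r : Projectivization F (Fin (v + 1) → F)) (hpr : p ≠ r) :
      (B.map Γ.map).countP (fun G => G.Adj p r) = lam := by
    rw [Multiset.countP_map, ← hpair p r hpr, Multiset.countP_eq_card_filter]
    simp only [SimpleGraph.map_adj', hpr, ne_eq, not_false_eq_true, true_and]
    congr!
  have hcount := SimpleGraph.mul_card_mul_card_sub_one_eq_of_countP_adj _ hcover hblock
  rw [Multiset.card_map, ← Nat.card_eq_fintype_card, card_fin_fun,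
    Nat.pow_succ_sub_one_div_sub_one Fintype.one_lt_card, add_tsub_cancel_right] at hcount
  refine ⟨Multiset.card B, ?_⟩
  rw [add_tsub_cancel_right, Nat.pow_succ_sub_one_div_sub_one Fintype.one_lt_card, ← hcount]
  ring

theorem design_over_Fq_edge_divisibility
    (q v lam s m : ℕ) (hq : IsPrimePow q) (hv : 0 < v)
    (F : Type*) [Field F] [Fintype F] (hF : Fintype.card F = q)
    (Γ : SimpleGraph (Fin m)) [DecidableRel Γ.Adj] (hs : Γ.edgeFinset.card = s)
    (B : Multiset (Fin m → Projectivization F (Fin v → F)))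
    (hinj : ∀ f ∈ B, Function.Injective f)
    (hsub : ∀ f ∈ B, ∃ W : Submodule F (Fin v → F),
      Set.range f = {p : Projectivization F (Fin v → F) | p.submodule ≤ W})
    (hpair : ∀ p r : Projectivization F (Fin v → F), p ≠ r →
      @Multiset.countP _ (fun f => ∃ a b : Fin m, Γ.Adj a b ∧ f a = p ∧ f b = r)
        (Classical.decPred _) B = lam) :
    2 * s ∣ lam * q * ((q ^ v - 1) / (q - 1)) * ((q ^ (v - 1) - 1) / (q - 1)) :=
  design_over_Fq_edge_divisibility_general q v lam s m F hF Γ hs B hinj hpair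
end

section
/- Let q > 1 be an odd integer and v = (k-1)t + r with r ∈ {0,1}. Then ([v]_q · [v-1]_q) / (2·[k-1]_q) is an integer only if t·((k-1)t + 1) is even; in particular, if k is odd then t must be even. -/
/-!
For `q` odd, `[n]_q = 1 + q + ⋯ + q^(n-1)` has the parity of `n`. Exactly one of `v`, `v - 1`
equals `(k-1)t`, and `[(k-1)t]_q = [k-1]_q · (1 + q^(k-1) + ⋯ + q^((k-1)(t-1)))`; cancelling
`[k-1]_q` leaves `2 ∣ [t]_{q^(k-1)} · [w]_q`, where `w ≡ (k-1)t + 1 (mod 2)` is the other one of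
`v`, `v - 1`. Reducing modulo 2 gives `2 ∣ t · ((k-1)t + 1)`.
-/

open Finset

theorem Odd.even_geom_sum_iff {a : ℕ} (ha : Odd a) (n : ℕ) :
    Even (∑ i ∈ range n, a ^ i) ↔ Even n := by
  induction n with
  | zero => simp
  | succ n ih =>
    have : ¬Even (a ^ n) := Nat.not_even_iff_odd.2 ha.pow
    rw [sum_range_succ, Nat.even_add, ih, Nat.even_add_one]
    tauto

theorem geom_sum_range_mul {R : Type*} [CommSemiring R] (x : R) (m t : ℕ) :
    ∑ i ∈ range (m * t), x ^ i = (∑ i ∈ range m, x ^ i) * ∑ i ∈ range t, (x ^ m) ^ i := by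
  induction t with
  | zero => simp
  | succ t ih =>
    rw [Nat.mul_succ, sum_range_add, ih, sum_range_succ, mul_add, ← pow_mul]
    simp only [pow_add, ← mul_sum]
    ring

theorem path_design_parity (q v k t r : ℕ) (hq : 1 < q) (hqodd : Odd q)
    (hk : 2 ≤ k) (hr : r = 0 ∨ r = 1) (hv : v = (k - 1) * t + r)
    (hdvd : 2 * ((q ^ (k - 1) - 1) / (q - 1)) ∣
      ((q ^ v - 1) / (q - 1)) * ((q ^ (v - 1) - 1) / (q - 1))) :
    Even (t * ((k - 1) * t + 1)) ∧ (Odd k → Even t) := by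
  obtain rfl | ht := Nat.eq_zero_or_pos t
  · simp
  set m := k - 1
  set w := 2 * v - 1 - m * t
  simp only [← Nat.geomSum_eq hq] at hdvd
  have hpair : (∑ i ∈ range v, q ^ i) * ∑ i ∈ range (v - 1), q ^ i =
      (∑ i ∈ range m, q ^ i) * ((∑ i ∈ range t, (q ^ m) ^ i) * ∑ i ∈ range w, q ^ i) := by
    rw [← mul_assoc, ← geom_sum_range_mul]
    rcases hr with rfl | rfl
    · rw [show w = v - 1 by omega, hv, add_zero]
    · rw [show w = v by omega, show v - 1 = m * t by omega, mul_comm]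
  have hm_pos : 0 < ∑ i ∈ range m, q ^ i :=
    sum_pos (fun i _ => pow_pos (by omega) i) (nonempty_range_iff.2 (by omega))
  rw [hpair, mul_comm 2] at hdvd
  have htw : Even t ∨ Even w := by
    rw [← (hqodd.pow (n := m)).even_geom_sum_iff t, ← hqodd.even_geom_sum_iff w,
      ← Nat.even_mul, even_iff_two_dvd]
    exact (Nat.mul_dvd_mul_iff_left hm_pos).mp hdvd
  have hw : Even w ↔ Even (m * t + 1) := by
    simp only [Nat.even_iff]
    have : 0 < m * t := Nat.mul_pos (by omega) ht
    omega
  rw [hw] at htw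
  refine ⟨htw.elim (·.mul_right _) (·.mul_left _), fun hkodd => ?_⟩
  have hmt : Even (m * t) := (Nat.Odd.sub_odd hkodd odd_one).mul_right t
  exact htw.resolve_right (Nat.not_even_iff_odd.2 hmt.add_one)
end

section
/- Let p = 4n + 3 be a prime and let D be the set of nonzero quadratic residues modulo p. Then D is a (4n+3, 2n+1, n) difference set in Z/pZ: |D| = 2n+1 and every nonzero element of Z/pZ can be written as d - d' with d, d' ∈ D in exactly n ways. -/
/-!
Every pair of elements of `D` has some difference: `#D` pairs give `0`, and the remaining
`#D * (#D - 1)` pairs are spread evenly over the `q - 1` nonzero elements of `𝔽_q`. Indeed,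
multiplying by a nonzero square permutes `D`, and swapping the two entries of a pair negates
its difference; since `-1` is not a square when `q ≡ 3 [MOD 4]`, every nonzero element is a
square or minus a square, so these two moves carry any nonzero difference to any other.
With `#D = (q - 1) / 2 = 2n + 1` this leaves `(2n + 1) * 2n / (4n + 2) = n` representations.
-/

open Finset

section DifferenceCount

variable {G : Type*} [AddCommGroup G] [DecidableEq G]

def diffCount (D : Finset G) (a : G) : ℕ := #{x ∈ D ×ˢ D | x.1 - x.2 = a}

lemma diffCount_zero (D : Finset G) : diffCount D 0 = #D := by
  rw [diffCount, ← diag_card D]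
  congr 1
  ext ⟨x, y⟩
  simp only [mem_filter, mem_product, sub_eq_zero, mem_diag]
  grind

lemma sum_diffCount [Fintype G] (D : Finset G) : ∑ a, diffCount D a = #D * #D := by
  rw [← card_product, card_eq_sum_card_fiberwise (f := fun x : G × G => x.1 - x.2)
    (t := univ) (fun _ _ => mem_coe.mpr (mem_univ _))]
  rfl

lemma card_add_mul_diffCount [Fintype G] {D : Finset G} {c : ℕ}
    (hc : ∀ a ≠ 0, diffCount D a = c) : #D + (Fintype.card G - 1) * c = #D * #D := by
  rw [← sum_diffCount, ← add_sum_erase _ _ (mem_univ 0), diffCount_zero,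
    sum_congr rfl fun a ha => hc a (ne_of_mem_erase ha), sum_const, smul_eq_mul,
    card_erase_of_mem (mem_univ 0), card_univ]

lemma diffCount_neg (D : Finset G) (a : G) : diffCount D (-a) = diffCount D a := by
  refine card_equiv (Equiv.prodComm G G) fun x => ?_
  simp only [mem_filter, mem_product, Equiv.prodComm_apply, Prod.fst_swap, Prod.snd_swap,
    ← neg_sub x.1 x.2, neg_eq_iff_eq_neg]
  tauto

end DifferenceCount

lemma diffCount_units_mul {R : Type*} [Ring R] [DecidableEq R] {D : Finset R} {u : Rˣ}
    (hu : ∀ x, (u : R) * x ∈ D ↔ x ∈ D) (a : R) : diffCount D (u * a) = diffCount D a := by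
  refine (card_equiv ((Units.mulLeft u).prodCongr (Units.mulLeft u)) fun x => ?_).symm
  simp only [mem_filter, mem_product, Equiv.prodCongr_apply, Prod.map_fst, Prod.map_snd,
    Units.mulLeft_apply, hu, ← mul_sub, Units.mul_right_inj]

section NonzeroSquares

variable (F : Type*) [Field F] [Fintype F] [DecidableEq F]

def nonzeroSquares : Finset F := {x | x ≠ 0 ∧ IsSquare x}

variable {F}

lemma mem_nonzeroSquares {x : F} : x ∈ nonzeroSquares F ↔ x ≠ 0 ∧ IsSquare x := by
  simp [nonzeroSquares]

lemma mul_mem_nonzeroSquares_iff {u : F} (hu : u ∈ nonzeroSquares F) (x : F) :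
    u * x ∈ nonzeroSquares F ↔ x ∈ nonzeroSquares F := by
  obtain ⟨hu0, hsq⟩ := mem_nonzeroSquares.mp hu
  simp only [mem_nonzeroSquares, ne_eq, mul_eq_zero, hu0, false_or]
  refine and_congr_right fun _ => ⟨fun h => ?_, hsq.mul⟩
  simpa [hu0] using (isSquare_inv.mpr hsq).mul h

lemma two_mul_card_nonzeroSquares (hF : ringChar F ≠ 2) :
    2 * #(nonzeroSquares F) = Fintype.card F - 1 := by
  have hmaps : ((univ.erase 0 : Finset F) : Set F).MapsTo (fun x => x * x) (nonzeroSquares F) :=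
    fun x hx => mem_nonzeroSquares.mpr ⟨mul_self_ne_zero.mpr (ne_of_mem_erase hx), x, rfl⟩
  have hfiber : ∀ y ∈ nonzeroSquares F, #{x ∈ univ.erase (0 : F) | x * x = y} = 2 := by
    intro y hy
    obtain ⟨hy0, hsq⟩ := mem_nonzeroSquares.mp hy
    have hroots := quadraticChar_card_sqrts hF y
    rw [(quadraticChar_one_iff_isSquare hy0).mpr hsq] at hroots
    have hfiber_eq : {x ∈ univ.erase (0 : F) | x * x = y} = {x : F | x ^ 2 = y}.toFinset := by
      ext x
      simp only [mem_filter, mem_erase, mem_univ, and_true, Set.mem_toFinset, Set.mem_ofPred_eq,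
        sq]
      exact ⟨And.right, fun h => ⟨by rintro rfl; exact hy0 (by simpa using h.symm), h⟩⟩
    rw [hfiber_eq]
    exact_mod_cast hroots
  rw [← card_univ, ← card_erase_of_mem (mem_univ 0), card_eq_sum_card_fiberwise hmaps,
    sum_congr rfl hfiber, sum_const, smul_eq_mul, mul_comm]

lemma isSquare_neg_of_not_isSquare (hF : ¬ IsSquare (-1 : F)) {s : F} (hs0 : s ≠ 0)
    (hs : ¬ IsSquare s) : IsSquare (-s) := by
  refine (quadraticChar_one_iff_isSquare (neg_ne_zero.mpr hs0)).mp ?_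
  rw [neg_eq_neg_one_mul, map_mul, quadraticChar_neg_one_iff_not_isSquare.mpr hF,
    quadraticChar_neg_one_iff_not_isSquare.mpr hs, neg_one_mul, neg_neg]

lemma diffCount_nonzeroSquares_mul (hF : ¬ IsSquare (-1 : F)) {s : F} (hs0 : s ≠ 0) (a : F) :
    diffCount (nonzeroSquares F) (s * a) = diffCount (nonzeroSquares F) a := by
  by_cases hs : IsSquare s
  · exact diffCount_units_mul (u := Units.mk0 s hs0)
      (mul_mem_nonzeroSquares_iff (mem_nonzeroSquares.mpr ⟨hs0, hs⟩)) a
  · have hneg : -s ∈ nonzeroSquares F :=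
      mem_nonzeroSquares.mpr ⟨neg_ne_zero.mpr hs0, isSquare_neg_of_not_isSquare hF hs0 hs⟩
    rw [← neg_mul_neg]
    exact (diffCount_units_mul (u := Units.mk0 (-s) (neg_ne_zero.mpr hs0))
      (mul_mem_nonzeroSquares_iff hneg) (-a)).trans (diffCount_neg _ a)

theorem nonzeroSquares_isDifferenceSet {n : ℕ} (hq : Fintype.card F = 4 * n + 3) :
    #(nonzeroSquares F) = 2 * n + 1 ∧ ∀ a ≠ 0, diffCount (nonzeroSquares F) a = n := by
  have hchar : ringChar F ≠ 2 := fun h => by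
    have := FiniteField.even_card_iff_char_two.mp h
    omega
  have hF : ¬ IsSquare (-1 : F) := by
    rw [FiniteField.isSquare_neg_one_iff, hq]
    omega
  have hD : #(nonzeroSquares F) = 2 * n + 1 := by
    have := two_mul_card_nonzeroSquares hchar
    omega
  refine ⟨hD, fun a ha => ?_⟩
  have hcount := card_add_mul_diffCount fun b (hb : b ≠ 0) => by
    rw [← div_mul_cancel₀ b ha, diffCount_nonzeroSquares_mul hF (div_ne_zero hb ha)]
  rw [hq, hD, show 4 * n + 3 - 1 = 4 * n + 2 by omega] at hcount
  refine Nat.eq_of_mul_eq_mul_left (show 0 < 4 * n + 2 by omega) ?_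
  linarith

end NonzeroSquares

theorem paley_difference_set (n p : ℕ) [Fact p.Prime] (hp : p = 4 * n + 3) :
    (Finset.univ.filter fun x : ZMod p => x ≠ 0 ∧ ∃ r : ZMod p, x = r * r).card
      = 2 * n + 1 ∧
    ∀ a : ZMod p, a ≠ 0 →
      (Finset.univ.filter fun dd : ZMod p × ZMod p =>
        (dd.1 ≠ 0 ∧ ∃ r : ZMod p, dd.1 = r * r) ∧
        (dd.2 ≠ 0 ∧ ∃ r : ZMod p, dd.2 = r * r) ∧
        dd.1 - dd.2 = a).card = n := by
  obtain ⟨hcard, hdiff⟩ :=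
    nonzeroSquares_isDifferenceSet (F := ZMod p) (n := n) (by rw [ZMod.card, hp])
  -- `IsSquare x` unfolds to `∃ r, x = r * r`, so `hcard` is the first claim up to defeq.
  refine ⟨hcard, fun a ha => ?_⟩
  rw [← hdiff a ha, diffCount]
  congr 1
  ext dd
  simp only [mem_filter, mem_product, mem_univ, true_and, mem_nonzeroSquares, IsSquare, and_assoc]
end

section
/- Let G be a finite group of order v, let Γ be a graph with s edges, and suppose λ(v-1) = 2st. Let A ≤ Aut(G) have order d dividing gcd(v-1, t) and act semiregularly on G \ {1}. Suppose I is a family of t/d subgraphs of the complete graph on G, each isomorphic to Γ, such that the multiset of differences ΔI = {x y^{-1} : (x,y) an ordered pair of adjacent vertices of some B ∈ I} contains exactly λ elements from each A-orbit on G \ {1}. Then the family F = {B^α : B ∈ I, α ∈ A} satisfies: ΔF covers every nonidentity element of G exactly λ times. -/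
/-!
Since `Δ(B^α) = α(ΔB)`, the element `g` occurs in `Δ(B^α)` as often as `α⁻¹ g` occurs in `ΔB`.
Summing over `α ∈ A`, which is closed under inversion, counts the elements of `ΔB` lying in
`{α g | α ∈ A}`; by semiregularity `α ↦ α g` is injective on `A` for `g ≠ 1`, so this is exactly
the number of elements of `ΔB` in the `A`-orbit of `g`, and summing over `B ∈ I` gives `λ`.
-/

namespace Multiset

theorem countP_bind {α β : Type*} (p : β → Prop) [DecidablePred p] (s : Multiset α)
    (f : α → Multiset β) : (s.bind f).countP p = (s.map fun a => (f a).countP p).sum := by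
  simp [countP_eq_card_filter, filter_bind, card_bind]

theorem countP_mem_eq_sum_count {α : Type*} [DecidableEq α] (S : Finset α) (m : Multiset α) :
    m.countP (· ∈ S) = ∑ x ∈ S, m.count x := by
  calc m.countP (· ∈ S)
      = card (m.filter (· ∈ S)) := countP_eq_card_filter _ _
    _ = ∑ x ∈ S, (m.filter (· ∈ S)).count x :=
        (sum_count_eq_card fun _ hx => (mem_filter.1 hx).2).symm
    _ = ∑ x ∈ S, m.count x := Finset.sum_congr rfl fun _ hx => count_filter_of_pos hx

end Multiset

namespace MulAut

variable {G : Type*} [Group G]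

theorem count_map [DecidableEq G] (α : MulAut G) (g : G) (M : Multiset G) :
    (M.map α).count g = M.count (α⁻¹ g) := by
  conv_lhs => rw [← α.apply_symm_apply g]
  exact Multiset.count_map_eq_count' _ _ α.injective _

theorem map_map_mul_inv {V : Type*} (α : MulAut G) (f : V → G) (E : Multiset (V × V)) :
    (E.map fun ab => α (f ab.1) * (α (f ab.2))⁻¹) = (E.map fun ab => f ab.1 * (f ab.2)⁻¹).map α := by
  simp [Multiset.map_map]

variable {A : Finset (MulAut G)} (hAmul : ∀ α ∈ A, ∀ β ∈ A, α * β ∈ A)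
  (hAinv : ∀ α ∈ A, α⁻¹ ∈ A) (hsemi : ∀ α ∈ A, ∀ g : G, g ≠ 1 → α g = g → α = 1)
include hAmul hAinv hsemi

theorem injOn_apply_of_semiregular {g : G} (hg : g ≠ 1) :
    Set.InjOn (fun α : MulAut G => α g) A := by
  intro α hα β hβ hαβ
  have hfix : (β⁻¹ * α) g = g := by
    simp only [mul_apply, show α g = β g from hαβ, inv_apply_self]
  rw [← mul_inv_cancel_left β α, hsemi _ (hAmul _ (hAinv _ hβ) _ hα) g hg hfix, mul_one]

theorem count_bind_map_eq_countP_orbit [DecidableEq G] {g : G} (hg : g ≠ 1) (M : Multiset G) :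
    (A.val.bind fun α => M.map α).count g = M.countP fun x => ∃ α ∈ A, α g = x := by
  calc (A.val.bind fun α => M.map α).count g
      = ∑ α ∈ A, M.count (α⁻¹ g) := by simp only [Multiset.count_bind, count_map]; rfl
    _ = ∑ α ∈ A, M.count (α g) :=
        Finset.sum_nbij' (·⁻¹) (·⁻¹) hAinv hAinv (by simp) (by simp) (by simp)
    _ = ∑ x ∈ A.image (· g), M.count x :=
        (Finset.sum_image (f := M.count) (injOn_apply_of_semiregular hAmul hAinv hsemi hg)).symm
    _ = M.countP fun x => ∃ α ∈ A, α g = x := by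
        rw [← Multiset.countP_mem_eq_sum_count]
        simp only [Finset.mem_image]

end MulAut

theorem multiplier_theorem_general {G : Type*} [Group G] [DecidableEq G]
    (lam m : ℕ)
    (Γ : SimpleGraph (Fin m)) [DecidableRel Γ.Adj]
    (A : Finset (MulAut G))
    (hAmul : ∀ α ∈ A, ∀ β ∈ A, α * β ∈ A) (hAinv : ∀ α ∈ A, α⁻¹ ∈ A)
    (hsemi : ∀ α ∈ A, ∀ g : G, g ≠ 1 → α g = g → α = 1)
    (I : Multiset (Fin m → G))
    (hdist : ∀ g : G, g ≠ 1 →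
      @Multiset.countP _ (fun x : G => ∃ α ∈ A, α g = x) (Classical.decPred _)
        (I.bind fun f =>
          ((Finset.univ.filter fun ab : Fin m × Fin m => Γ.Adj ab.1 ab.2).val.map
            fun ab => f ab.1 * (f ab.2)⁻¹)) = lam) :
    ∀ g : G, g ≠ 1 →
      Multiset.count g
        (I.bind fun f => A.val.bind fun α =>
          ((Finset.univ.filter fun ab : Fin m × Fin m => Γ.Adj ab.1 ab.2).val.map
            fun ab => α (f ab.1) * (α (f ab.2))⁻¹)) = lam := by
  intro g hg
  rw [← hdist g hg, Multiset.count_bind, Multiset.countP_bind]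
  refine congrArg Multiset.sum (Multiset.map_congr rfl fun f _ => ?_)
  simp only [MulAut.map_map_mul_inv]
  convert MulAut.count_bind_map_eq_countP_orbit hAmul hAinv hsemi hg _

theorem multiplier_theorem {G : Type*} [Group G] [Fintype G] [DecidableEq G]
    (v s t lam d m : ℕ) (hv : Fintype.card G = v)
    (Γ : SimpleGraph (Fin m)) [DecidableRel Γ.Adj] (hs : Γ.edgeFinset.card = s)
    (hlt : lam * (v - 1) = 2 * s * t)
    (A : Finset (MulAut G)) (hA1 : (1 : MulAut G) ∈ A)
    (hAmul : ∀ α ∈ A, ∀ β ∈ A, α * β ∈ A) (hAinv : ∀ α ∈ A, α⁻¹ ∈ A)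
    (hAd : A.card = d) (hd : d ∣ Nat.gcd (v - 1) t)
    (hsemi : ∀ α ∈ A, ∀ g : G, g ≠ 1 → α g = g → α = 1)
    (I : Multiset (Fin m → G)) (hinj : ∀ f ∈ I, Function.Injective f)
    (hIcard : Multiset.card I = t / d)
    (hdist : ∀ g : G, g ≠ 1 →
      @Multiset.countP _ (fun x : G => ∃ α ∈ A, α g = x) (Classical.decPred _)
        (I.bind fun f =>
          ((Finset.univ.filter fun ab : Fin m × Fin m => Γ.Adj ab.1 ab.2).val.map
            fun ab => f ab.1 * (f ab.2)⁻¹)) = lam) :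
    ∀ g : G, g ≠ 1 →
      Multiset.count g
        (I.bind fun f => A.val.bind fun α =>
          ((Finset.univ.filter fun ab : Fin m × Fin m => Γ.Adj ab.1 ab.2).val.map
            fun ab => α (f ab.1) * (α (f ab.2))⁻¹)) = lam :=
  multiplier_theorem_general lam m Γ A hAmul hAinv hsemi I hdist
end
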